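/- arXiv:0902.3265 — 3 statements merged into one kernel-verified Lean document; each statement's English description precedes it below -/
import Mathlib

section
/- For all fixed reals d > 0 and ε > 0, asymptotically almost surely every subgraph G' of the Erdős–Rényi random graph G(n, d/n) with at least one vertex and at most (4d)^{−(1+1/ε)}·n vertices satisfies ‖G'‖/|G'| ≤ 1 + ε, where ‖G'‖ and |G'| denote the number of edges and vertices of G'. That is, the probability that G(n, d/n) contains a subgraph G' with 1 ≤ |G'| ≤ (4d)^{−(1+1/ε)}·n and ‖G'‖ > (1+ε)|G'| tends to 0 as n → ∞. -/
open SimpleGraph MeasureTheory Filter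

/-! ### Subdivisions -/

/-- A witness that the graph `H` is a subdivision of the graph `G`:  `H` is obtained from `G`
by replacing each edge `ab` of `G` by a path between (the copies of) `a` and `b` whose internal
(division) vertices are new and pairwise distinct. -/
structure SubdivisionWitness {V : Type*} {W : Type*} (G : SimpleGraph V) (H : SimpleGraph W) where
  emb : V ↪ W
  path : ∀ ⦃a b : V⦄, G.Adj a b → H.Walk (emb a) (emb b)
  path_isPath : ∀ ⦃a b : V⦄ (h : G.Adj a b), (path h).IsPath
  path_symm : ∀ ⦃a b : V⦄ (h : G.Adj a b), path h.symm = (path h).reverse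
  internal_new : ∀ ⦃a b : V⦄ (h : G.Adj a b) (x : V),
    emb x ∈ (path h).support → x = a ∨ x = b
  internally_disjoint : ∀ ⦃a b a' b' : V⦄ (h : G.Adj a b) (h' : G.Adj a' b'),
    s(a, b) ≠ s(a', b') → ∀ w : W, w ∈ (path h).support → w ∈ (path h').support →
      ∃ x : V, emb x = w
  vert_cover : ∀ w : W,
    (∃ x : V, emb x = w) ∨ ∃ (a b : V) (h : G.Adj a b), w ∈ (path h).support
  edge_cover : ∀ e ∈ H.edgeSet, ∃ (a b : V) (h : G.Adj a b), e ∈ (path h).edges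

/-- `H` is a subdivision of `G`. -/
def IsSubdivision {V W : Type*} (G : SimpleGraph V) (H : SimpleGraph W) : Prop :=
  Nonempty (SubdivisionWitness G H)

/-- `H` is a `(≤ t)`-subdivision of `G`: a subdivision with at most `t` division vertices
per edge (i.e. each replacing path has length at most `t + 1`). -/
def IsLESubdivision {V W : Type*} (t : ℕ) (G : SimpleGraph V) (H : SimpleGraph W) : Prop :=
  ∃ S : SubdivisionWitness G H, ∀ ⦃a b : V⦄ (h : G.Adj a b), (S.path h).length ≤ t + 1

/-- `H` is the `t`-subdivision of `G`: exactly `t` division vertices on each edge. -/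
def IsExactSubdivision {V W : Type*} (t : ℕ) (G : SimpleGraph V) (H : SimpleGraph W) : Prop :=
  ∃ S : SubdivisionWitness G H, ∀ ⦃a b : V⦄ (h : G.Adj a b), (S.path h).length = t + 1

/-! ### Shallow topological minors and the top-grad -/

/-- `H` is a shallow topological minor of `G` at depth `d`:  some `(≤ 2d)`-subdivision of `H`
is isomorphic to a subgraph of `G`. -/
def IsShallowTopMinor {W V : Type*} (d : ℕ) (H : SimpleGraph W) (G : SimpleGraph V) : Prop :=
  ∃ (m : ℕ) (S : SimpleGraph (Fin m)),
    IsLESubdivision (2 * d) H S ∧ ∃ f : S →g G, Function.Injective f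

/-- The topological greatest reduced average density (top-grad) `∇̃_d(G)` of rank `d`:
the maximum of `‖H‖/|H|` over all shallow topological minors `H` of `G` at depth `d`
with at least one vertex. -/
noncomputable def topGrad {V : Type*} (d : ℕ) (G : SimpleGraph V) : ℝ :=
  sSup {q : ℝ | ∃ (m : ℕ) (H : SimpleGraph (Fin m)), 0 < m ∧
    IsShallowTopMinor d H G ∧ q = (Nat.card H.edgeSet : ℝ) / m}

/-! ### Shallow minors, the grad, and bounded expansion -/

/-- `H` is a shallow minor of `G` at depth `d`: it is obtained from `G` by contracting
pairwise disjoint connected subgraphs (branch sets) of radius at most `d` and taking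
a simple subgraph of the result. -/
def IsShallowMinor {W V : Type*} (d : ℕ) (H : SimpleGraph W) (G : SimpleGraph V) : Prop :=
  ∃ B : W → Set V,
    (∀ i, (B i).Nonempty) ∧
    (∀ i j, i ≠ j → Disjoint (B i) (B j)) ∧
    (∀ i : W, ∃ c : (B i), ∀ v : (B i), ∃ p : (G.induce (B i)).Walk c v, p.length ≤ d) ∧
    (∀ i j : W, H.Adj i j → ∃ u ∈ B i, ∃ v ∈ B j, G.Adj u v)

/-- The greatest reduced average density (grad) `∇_d(G)` of rank `d`. -/
noncomputable def grad {V : Type*} (d : ℕ) (G : SimpleGraph V) : ℝ :=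
  sSup {q : ℝ | ∃ (m : ℕ) (H : SimpleGraph (Fin m)), 0 < m ∧
    IsShallowMinor d H G ∧ q = (Nat.card H.edgeSet : ℝ) / m}

/-- A class of finite simple graphs, represented by graphs on `Fin n` for all `n`. -/
abbrev GraphClass := Set ((n : ℕ) × SimpleGraph (Fin n))

/-- A class of graphs has bounded expansion if `∇_d` is bounded on the class by a
function of `d`. -/
def BoundedExpansion (C : GraphClass) : Prop :=
  ∃ f : ℕ → ℝ, ∀ G ∈ C, ∀ d : ℕ, grad d G.2 ≤ f d

/-! ### Graph parameters -/

/-- A graph parameter is isomorphism-invariant. -/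
def IsoInvariant (α : ((n : ℕ) × SimpleGraph (Fin n)) → ℝ) : Prop :=
  ∀ G H : (n : ℕ) × SimpleGraph (Fin n), Nonempty (G.2 ≃g H.2) → α G = α H

/-- A graph parameter is strongly topological: `α(G)` and `α(H)` bound each other through a
fixed non-decreasing function, whenever `H` is a `(≤1)`-subdivision of `G`. -/
def StronglyTopological (α : ((n : ℕ) × SimpleGraph (Fin n)) → ℝ) : Prop :=
  ∃ f : ℝ → ℝ, Monotone f ∧ ∀ G H : (n : ℕ) × SimpleGraph (Fin n),
    IsLESubdivision 1 G.2 H.2 → α G ≤ f (α H) ∧ α H ≤ f (α G)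

/-- A graph parameter is monotone: it does not increase when passing to a subgraph. -/
def MonotoneParam (α : ((n : ℕ) × SimpleGraph (Fin n)) → ℝ) : Prop :=
  ∀ G H : (n : ℕ) × SimpleGraph (Fin n),
    (∃ f : H.2 →g G.2, Function.Injective f) → α H ≤ α G

/-- A graph parameter is degree-bound: every nonempty graph has a vertex of degree at most
`f(α(G))` for some fixed function `f`. -/
def DegreeBound (α : ((n : ℕ) × SimpleGraph (Fin n)) → ℝ) : Prop :=
  ∃ f : ℝ → ℝ, ∀ G : (n : ℕ) × SimpleGraph (Fin n), 0 < G.1 →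
    ∃ v : Fin G.1, (Nat.card (G.2.neighborSet v) : ℝ) ≤ f (α G)

/-! ### Queue and stack layouts -/

/-- A `k`-queue layout of `G` with respect to the linear order on `V`: an assignment of the
(potential) edges to `k` queues so that no two edges in a common queue are nested. -/
def IsQueueLayout {V : Type*} [LinearOrder V] (G : SimpleGraph V) (k : ℕ)
    (q : Sym2 V → Fin k) : Prop :=
  ∀ ⦃a b c d : V⦄, G.Adj a b → G.Adj c d → a < b → c < d →
    q s(a, b) = q s(c, d) → ¬(a < c ∧ d < b)

/-- The signed queue function `Q`:  `Q(v,w) = q(vw)` if `v < w` and `Q(v,w) = -q(vw)`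
if `w < v` (queues are numbered `1,…,k`). -/
def signedQueue {V : Type*} [LinearOrder V] {k : ℕ} (q : Sym2 V → Fin k) (v w : V) : ℤ :=
  if v < w then ((q s(v, w) : ℕ) : ℤ) + 1 else -(((q s(v, w) : ℕ) : ℤ) + 1)

/-- `G` admits a `k`-queue layout (for some vertex ordering). -/
def HasQueueLayout {V : Type*} (G : SimpleGraph V) (k : ℕ) : Prop :=
  ∃ (ord : LinearOrder V) (q : Sym2 V → Fin k), @IsQueueLayout V ord G k q

/-- A `k`-stack layout of `G` with respect to the linear order on `V`: an assignment of the
(potential) edges to `k` stacks so that no two edges in a common stack cross. -/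
def IsStackLayout {V : Type*} [LinearOrder V] (G : SimpleGraph V) (k : ℕ)
    (q : Sym2 V → Fin k) : Prop :=
  ∀ ⦃a b c d : V⦄, G.Adj a b → G.Adj c d → a < b → c < d →
    q s(a, b) = q s(c, d) → ¬(a < c ∧ c < b ∧ b < d)

/-- `G` admits a `k`-stack layout (for some vertex ordering). -/
def HasStackLayout {V : Type*} (G : SimpleGraph V) (k : ℕ) : Prop :=
  ∃ (ord : LinearOrder V) (q : Sym2 V → Fin k), @IsStackLayout V ord G k q

/-! ### Contracting the components of a subgraph -/

/-- The equivalence relation on `V(G)` identifying the vertices in a common connected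
component of the subgraph `F`. -/
def contractSetoid {V : Type*} {G : SimpleGraph V} (F : G.Subgraph) : Setoid V where
  r u v := u = v ∨ ∃ (hu : u ∈ F.verts) (hv : v ∈ F.verts),
    F.coe.Reachable ⟨u, hu⟩ ⟨v, hv⟩
  iseqv := by
    refine ⟨fun x => Or.inl rfl, ?_, ?_⟩
    · rintro x y (rfl | ⟨hx, hy, h⟩)
      · exact Or.inl rfl
      · exact Or.inr ⟨hy, hx, h.symm⟩
    · rintro x y z (rfl | ⟨hx, hy, h⟩) hyz
      · exact hyz
      · rcases hyz with (rfl | ⟨hy', hz, h'⟩)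
        · exact Or.inr ⟨hx, hy, h⟩
        · exact Or.inr ⟨hx, hz, h.trans h'⟩

/-- The simple graph obtained from `G` by contracting each connected component of the
subgraph `F` to a single vertex (deleting loops and parallel edges). -/
def contractGraph {V : Type*} {G : SimpleGraph V} (F : G.Subgraph) :
    SimpleGraph (Quotient (contractSetoid F)) where
  Adj A B := A ≠ B ∧ ∃ u v : V, G.Adj u v ∧
    Quotient.mk (contractSetoid F) u = A ∧ Quotient.mk (contractSetoid F) v = B
  symm := by
    constructor
    rintro A B ⟨hne, u, v, h, hu, hv⟩
    exact ⟨hne.symm, v, u, h.symm, hv, hu⟩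
  loopless := by
    constructor
    rintro A ⟨hne, -⟩
    exact hne rfl

/-! ### Non-repetitive and acyclic colourings -/

/-- A colouring `f` of `G` is non-repetitive if there is no path `v₀, …, v_{2s-1}` in `G`
(`s ≥ 1`, vertices pairwise distinct, consecutive vertices adjacent) with
`f(v_i) = f(v_{i+s})` for all `i < s`. -/
def NonRepColoring {V α : Type*} (G : SimpleGraph V) (f : V → α) : Prop :=
  ∀ s : ℕ, 0 < s → ∀ v : ℕ → V,
    (∀ i, i < 2 * s → ∀ j, j < 2 * s → i ≠ j → v i ≠ v j) →
    (∀ i, i + 1 < 2 * s → G.Adj (v i) (v (i + 1))) →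
    ¬(∀ i, i < s → f (v i) = f (v (i + s)))

/-- `π(G)`: the minimum number of colours in a non-repetitive colouring of `G`. -/
noncomputable def piNum {V : Type*} (G : SimpleGraph V) : ℕ :=
  sInf {k : ℕ | ∃ f : V → Fin k, NonRepColoring G f}

/-- A proper colouring of `G` with no bichromatic cycle (every cycle receives at least
three colours). -/
def AcyclicColoring {V α : Type*} (G : SimpleGraph V) (f : V → α) : Prop :=
  (∀ u w : V, G.Adj u w → f u ≠ f w) ∧
  ∀ (u : V) (c : G.Walk u u), c.IsCycle →
    ∃ x ∈ c.support, ∃ y ∈ c.support, ∃ z ∈ c.support, f x ≠ f y ∧ f x ≠ f z ∧ f y ≠ f z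

/-- `χₐ(G)`: the acyclic chromatic number of `G`. -/
noncomputable def chiA {V : Type*} (G : SimpleGraph V) : ℕ :=
  sInf {k : ℕ | ∃ f : V → Fin k, AcyclicColoring G f}

/-! ### The Erdős–Rényi random graph `G(n, p)` -/

/-- The Erdős–Rényi measure: each potential edge (coordinate) is present independently with
probability `p` (truncated to `[0,1]`). -/
noncomputable def erdosRenyi (n : ℕ) (p : ℝ) : Measure (Sym2 (Fin n) → Bool) :=
  Measure.pi fun _ =>
    ((PMF.bernoulli (min (Real.toNNReal p) 1) (min_le_right _ _)).toMeasure)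

/-- The simple graph on `Fin n` determined by an outcome `ω` of the edge indicators. -/
def graphOf {n : ℕ} (ω : Sym2 (Fin n) → Bool) : SimpleGraph (Fin n) where
  Adj u v := u ≠ v ∧ ω s(u, v) = true
  symm := by
    constructor
    rintro u v ⟨hne, h⟩
    exact ⟨hne.symm, by rwa [Sym2.eq_swap]⟩
  loopless := by
    constructor
    rintro u ⟨hne, -⟩
    exact hne rfl

/-! First-moment method. A subgraph on `k` vertices with more than `(1 + ε) k` edges contains
`m = ⌊(1 + ε) k⌋ + 1` edges inside some `k`-set, so the probability is at most
`∑_{k ≤ cn} C(n, k) C(C(k, 2), m) (d/n)^m` with `c = (4d)^{-(1 + 1/ε)}`. By `C(N, m) ≤ (eN/m)^m`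
the `k`-th term is `O((e a^{1+ε} (k/n)^ε)^k)` with `a = ed/(2(1 + ε))`, and for `k ≤ cn` the base
is at most `q (k/(cn))^ε`, where `q = e a^{1+ε} c^ε = e (e/(8(1 + ε)))^{1+ε} < 1` because `e² < 8`.
Hence the sum is `O(n^{-ε} ∑_k k^{⌈ε⌉} q^k) = O(n^{-ε})`. -/

open Real
open scoped ENNReal

lemma choose_mul_pow_le (N m : ℕ) {x : ℝ} (hx : 0 ≤ x) :
    (N.choose m : ℝ) * x ^ m ≤ (exp 1 * N * x / m) ^ m := by
  rcases Nat.eq_zero_or_pos m with rfl | hm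
  · simp
  have hm' : (0 : ℝ) < m := by exact_mod_cast hm
  have hfact : (m : ℝ) ^ m / m.factorial ≤ exp 1 ^ m := by
    simpa [← exp_nat_mul] using pow_div_factorial_le_exp (x := (m : ℝ)) hm'.le m
  calc (N.choose m : ℝ) * x ^ m ≤ (N : ℝ) ^ m / m.factorial * x ^ m := by
        gcongr; exact Nat.choose_le_pow_div m N
    _ = (N * x / m) ^ m * ((m : ℝ) ^ m / m.factorial) := by
        rw [div_pow]; field_simp; ring
    _ ≤ (N * x / m) ^ m * exp 1 ^ m := by gcongr
    _ = (exp 1 * N * x / m) ^ m := by rw [← mul_pow]; ring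

lemma rpow_le_max_one_mul_rpow {y b a s : ℝ} (hy : 0 < y) (hyb : y ≤ b) (has : a ≤ s)
    (hsa : s ≤ a + 1) : y ^ s ≤ max 1 b * y ^ a := by
  rcases le_or_gt y 1 with hy1 | hy1
  · calc y ^ s ≤ y ^ a := rpow_le_rpow_of_exponent_ge hy hy1 has
      _ ≤ max 1 b * y ^ a := le_mul_of_one_le_left (by positivity) (le_max_left _ _)
  · calc y ^ s ≤ y ^ (a + 1) := rpow_le_rpow_of_exponent_le hy1.le hsa
      _ = y * y ^ a := by rw [rpow_add hy, rpow_one, mul_comm]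
      _ ≤ max 1 b * y ^ a := by gcongr; exact hyb.trans (le_max_right _ _)

noncomputable def edgeThreshold (ε : ℝ) (k : ℕ) : ℕ := ⌊(1 + ε) * k⌋₊ + 1

/-- The expected number of pairs `(S, T)` in `G(n, p)`, where `S` is a `k`-set of vertices and
`T` a set of `edgeThreshold ε k` pairs inside `S`, all of them edges. -/
noncomputable def expectedDenseSets (n k : ℕ) (ε p : ℝ) : ℝ :=
  n.choose k * (k.choose 2).choose (edgeThreshold ε k) * p ^ edgeThreshold ε k

lemma expectedDenseSets_nonneg (n k : ℕ) (ε : ℝ) {p : ℝ} (hp : 0 ≤ p) :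
    0 ≤ expectedDenseSets n k ε p := by
  unfold expectedDenseSets
  positivity

lemma lt_edgeThreshold (ε : ℝ) (k : ℕ) : (1 + ε) * k < edgeThreshold ε k := by
  simpa [edgeThreshold] using Nat.lt_floor_add_one ((1 + ε) * k)

lemma edgeThreshold_le_add_one {ε : ℝ} (hε : 0 ≤ ε) (k : ℕ) :
    (edgeThreshold ε k : ℝ) ≤ (1 + ε) * k + 1 := by
  have := Nat.floor_le (by positivity : 0 ≤ (1 + ε) * k)
  push_cast [edgeThreshold]
  linarith

lemma edgeThreshold_le_of_lt {ε : ℝ} (hε : 0 ≤ ε) {k N : ℕ} (h : (1 + ε) * k < N) :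
    edgeThreshold ε k ≤ N :=
  (Nat.floor_lt (by positivity)).mpr h

lemma erdosRenyi_forall_edges_le (n : ℕ) (p : ℝ) (T : Finset (Sym2 (Fin n))) :
    erdosRenyi n p {ω | ∀ e ∈ T, ω e = true} ≤ ENNReal.ofReal p ^ T.card := by
  have hcyl : {ω : Sym2 (Fin n) → Bool | ∀ e ∈ T, ω e = true} =
      (T : Set (Sym2 (Fin n))).pi fun _ => {true} := rfl
  rw [hcyl, erdosRenyi, Measure.pi_pi_finset, Finset.prod_const]
  gcongr
  rw [PMF.toMeasure_apply_singleton _ _ (measurableSet_singleton _)]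
  exact ENNReal.coe_le_coe.mpr (min_le_left _ _)

lemma erdosRenyi_exists_dense_subgraph_le (n k m : ℕ) {p : ℝ} (hp : 0 ≤ p) :
    erdosRenyi n p {ω | ∃ H : (graphOf ω).Subgraph,
        Nat.card H.verts = k ∧ m ≤ Nat.card H.edgeSet}
      ≤ ENNReal.ofReal (n.choose k * (k.choose 2).choose m * p ^ m) := by
  classical
  let pairs (S : Finset (Fin n)) : Finset (Sym2 (Fin n)) := S.offDiag.image Sym2.mk.uncurry
  have hcover : {ω : Sym2 (Fin n) → Bool | ∃ H : (graphOf ω).Subgraph,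
        Nat.card H.verts = k ∧ m ≤ Nat.card H.edgeSet} ⊆
      ⋃ S ∈ Finset.powersetCard k Finset.univ, ⋃ T ∈ Finset.powersetCard m (pairs S),
        {ω | ∀ e ∈ T, ω e = true} := by
    rintro ω ⟨H, hk, hm⟩
    rw [Nat.card_eq_card_toFinset] at hk hm
    obtain ⟨T, hTH, hT⟩ := Finset.exists_subset_card_eq hm
    have hTadj : ∀ ⦃u v⦄, s(u, v) ∈ T → H.Adj u v := fun u v he => by simpa using hTH he
    simp only [Set.mem_iUnion, Finset.mem_powersetCard, exists_prop]
    refine ⟨_, ⟨Finset.subset_univ _, hk⟩, T, ⟨fun e he => ?_, hT⟩, fun e he => ?_⟩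
    · induction e using Sym2.ind with
      | _ u v =>
        have huv := hTadj he
        exact Finset.mem_image_of_mem Sym2.mk.uncurry (a := (u, v)) (Finset.mem_offDiag.mpr
          ⟨Set.mem_toFinset.mpr (H.edge_vert huv), Set.mem_toFinset.mpr (H.edge_vert huv.symm),
            (H.adj_sub huv).1⟩)
    · induction e using Sym2.ind with
      | _ u v => exact (H.adj_sub (hTadj he)).2
  calc _ ≤ ∑ S ∈ Finset.powersetCard k Finset.univ, ∑ T ∈ Finset.powersetCard m (pairs S),
        erdosRenyi n p {ω | ∀ e ∈ T, ω e = true} :=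
      (measure_mono hcover).trans <| (measure_biUnion_finset_le _ _).trans <|
        Finset.sum_le_sum fun S _ => measure_biUnion_finset_le _ _
    _ ≤ ∑ S ∈ Finset.powersetCard k Finset.univ, ∑ T ∈ Finset.powersetCard m (pairs S),
        ENNReal.ofReal p ^ m := by
      gcongr with _ _ T hT
      rw [← (Finset.mem_powersetCard.mp hT).2]
      exact erdosRenyi_forall_edges_le n p T
    _ = ENNReal.ofReal (n.choose k * (k.choose 2).choose m * p ^ m) := by
      rw [Finset.sum_congr rfl fun S hS => by
        rw [Finset.sum_const, Finset.card_powersetCard, Sym2.card_image_offDiag,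
          (Finset.mem_powersetCard.mp hS).2]]
      rw [Finset.sum_const, Finset.card_powersetCard, Finset.card_univ, Fintype.card_fin,
        ENNReal.ofReal_mul (by positivity), ENNReal.ofReal_mul (by positivity),
        ENNReal.ofReal_pow hp]
      simp [nsmul_eq_mul, mul_assoc]

lemma erdosRenyi_exists_small_dense_subgraph_le (n : ℕ) {p : ℝ} (hp : 0 ≤ p) {ε : ℝ}
    (hε : 0 ≤ ε) (K : ℝ) :
    erdosRenyi n p {ω | ∃ H : (graphOf ω).Subgraph,
        1 ≤ Nat.card H.verts ∧ (Nat.card H.verts : ℝ) ≤ K ∧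
        (1 + ε) * (Nat.card H.verts : ℝ) < (Nat.card H.edgeSet : ℝ)}
      ≤ ENNReal.ofReal (∑ k ∈ Finset.Icc 1 ⌊K⌋₊, expectedDenseSets n k ε p) := by
  have hcover : {ω : Sym2 (Fin n) → Bool | ∃ H : (graphOf ω).Subgraph,
        1 ≤ Nat.card H.verts ∧ (Nat.card H.verts : ℝ) ≤ K ∧
        (1 + ε) * (Nat.card H.verts : ℝ) < (Nat.card H.edgeSet : ℝ)} ⊆
      ⋃ k ∈ Finset.Icc 1 ⌊K⌋₊, {ω | ∃ H : (graphOf ω).Subgraph,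
        Nat.card H.verts = k ∧ edgeThreshold ε k ≤ Nat.card H.edgeSet} := by
    rintro ω ⟨H, h1, hK, hdense⟩
    exact Set.mem_biUnion (Finset.mem_Icc.mpr ⟨h1, Nat.le_floor hK⟩)
      ⟨H, rfl, edgeThreshold_le_of_lt hε hdense⟩
  calc _ ≤ ∑ k ∈ Finset.Icc 1 ⌊K⌋₊, erdosRenyi n p {ω | ∃ H : (graphOf ω).Subgraph,
        Nat.card H.verts = k ∧ edgeThreshold ε k ≤ Nat.card H.edgeSet} :=
      (measure_mono hcover).trans (measure_biUnion_finset_le _ _)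
    _ ≤ _ := by
      rw [ENNReal.ofReal_sum_of_nonneg fun k _ => expectedDenseSets_nonneg n k ε hp]
      exact Finset.sum_le_sum fun k _ => erdosRenyi_exists_dense_subgraph_le n k _ hp

lemma expectedDenseSets_le {d ε c : ℝ} (hd : 0 < d) (hε : 0 < ε) {n k : ℕ} (hk : 1 ≤ k)
    (hkn : (k : ℝ) ≤ c * n) :
    expectedDenseSets n k ε (d / n) ≤ max 1 (exp 1 * d / (2 * (1 + ε)) * c) *
        (exp 1 * (exp 1 * d / (2 * (1 + ε))) ^ (1 + ε) * ((k : ℝ) / n) ^ ε) ^ k := by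
  set m := edgeThreshold ε k
  set a := exp 1 * d / (2 * (1 + ε))
  set s := (k : ℝ) / n
  have hk' : (1 : ℝ) ≤ k := by exact_mod_cast hk
  have hn : (0 : ℝ) < n := by
    rcases (Nat.cast_nonneg n : (0 : ℝ) ≤ n).eq_or_lt with hn | hn
    · rw [← hn, mul_zero] at hkn
      linarith
    · exact hn
  have ha : 0 < a := by positivity
  have hs : 0 < s := by positivity
  have hsc : s ≤ c := by rwa [div_le_iff₀ hn]
  have hm : (1 + ε) * k < m := lt_edgeThreshold ε k
  have hvertices : (n.choose k : ℝ) ≤ (exp 1 / s) ^ k := by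
    simpa [s, div_div_eq_mul_div] using choose_mul_pow_le n k zero_le_one
  have hedges : ((k.choose 2).choose m : ℝ) * (d / n) ^ m ≤ (a * s) ^ m := by
    refine (choose_mul_pow_le _ m (by positivity)).trans (pow_le_pow_left₀ (by positivity) ?_ m)
    have hkε : 0 < (1 + ε) * k := by positivity
    rw [div_le_iff₀ (by linarith), Nat.cast_choose_two]
    calc exp 1 * (k * (k - 1) / 2) * (d / n) ≤ a * s * ((1 + ε) * k) := by
          simp only [a, s]
          field_simp
          nlinarith [exp_pos 1]
      _ ≤ a * s * m := by gcongr
  have hexcess : (a * s) ^ m ≤ max 1 (a * c) * (a * s) ^ ((1 + ε) * k) := by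
    rw [← rpow_natCast]
    exact rpow_le_max_one_mul_rpow (by positivity) (by gcongr) hm.le
      (edgeThreshold_le_add_one hε.le k)
  have hcollect : (exp 1 / s) ^ k * (a * s) ^ ((1 + ε) * k) = (exp 1 * a ^ (1 + ε) * s ^ ε) ^ k := by
    rw [rpow_mul (by positivity), rpow_natCast, ← mul_pow, mul_rpow ha.le hs.le,
      rpow_add hs, rpow_one]
    field_simp
  calc (n.choose k : ℝ) * (k.choose 2).choose m * (d / n) ^ m
      = (n.choose k : ℝ) * (((k.choose 2).choose m : ℝ) * (d / n) ^ m) := by ring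
    _ ≤ (exp 1 / s) ^ k * (max 1 (a * c) * (a * s) ^ ((1 + ε) * k)) :=
        mul_le_mul hvertices (hedges.trans hexcess) (by positivity) (by positivity)
    _ = max 1 (a * c) * (exp 1 * a ^ (1 + ε) * s ^ ε) ^ k := by rw [← hcollect]; ring

lemma dense_rate_lt_one {d ε : ℝ} (hd : 0 < d) (hε : 0 < ε) :
    exp 1 * (exp 1 * d / (2 * (1 + ε))) ^ (1 + ε) * ((4 * d) ^ (-(1 + 1 / ε))) ^ ε < 1 := by
  set r := exp 1 / (8 * (1 + ε))
  have h4d : 0 < 4 * d := by positivity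
  have hr : 0 < r := by positivity
  have he : exp 1 < 2.7182818286 := exp_one_lt_d9
  have hr1 : r ≤ 1 := by
    rw [div_le_one (by positivity)]
    linarith
  have hsplit : (exp 1 * d / (2 * (1 + ε))) ^ (1 + ε) * ((4 * d) ^ (-(1 + 1 / ε))) ^ ε
      = r ^ (1 + ε) := by
    rw [← rpow_mul h4d.le, show -(1 + 1 / ε) * ε = -(1 + ε) by field_simp; ring,
      rpow_neg h4d.le, ← div_eq_mul_inv, ← div_rpow (by positivity) h4d.le]
    congr 1
    simp only [r]
    field_simp
    ring
  rw [mul_assoc, hsplit]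
  calc exp 1 * r ^ (1 + ε) ≤ exp 1 * r := by
        gcongr
        simpa using rpow_le_rpow_of_exponent_ge hr hr1 (by linarith : (1 : ℝ) ≤ 1 + ε)
    _ < 1 := by
        rw [mul_div_assoc', div_lt_one (by positivity)]
        nlinarith [exp_pos 1]

lemma tendsto_sum_expectedDenseSets {d ε c : ℝ} (hd : 0 < d) (hε : 0 < ε) (hc : 0 < c)
    (hrate : exp 1 * (exp 1 * d / (2 * (1 + ε))) ^ (1 + ε) * c ^ ε < 1) :
    Tendsto (fun n : ℕ => ∑ k ∈ Finset.Icc 1 ⌊c * n⌋₊, expectedDenseSets n k ε (d / n))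
      atTop (nhds 0) := by
  set a := exp 1 * d / (2 * (1 + ε))
  set q := exp 1 * a ^ (1 + ε) * c ^ ε
  set B := max 1 (a * c)
  set M := ⌈ε⌉₊
  have hq : 0 ≤ q := by positivity
  have hsummable : Summable fun k : ℕ => (k : ℝ) ^ M * q ^ k :=
    summable_pow_mul_geometric_of_norm_lt_one M (by rwa [Real.norm_of_nonneg hq])
  set D := ∑' k : ℕ, (k : ℝ) ^ M * q ^ k
  have hterm : ∀ n : ℕ, ∀ k ∈ Finset.Icc 1 ⌊c * n⌋₊,
      expectedDenseSets n k ε (d / n) ≤ B * (c * n) ^ (-ε) * ((k : ℝ) ^ M * q ^ k) := by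
    intro n k hk
    obtain ⟨hk1, hkn⟩ := Finset.mem_Icc.mp hk
    have hkn' : (k : ℝ) ≤ c * n := (Nat.le_floor_iff' (by omega)).mp hkn
    have hk' : (1 : ℝ) ≤ k := by exact_mod_cast hk1
    have hcn : 0 < c * n := by linarith
    set u := ((k : ℝ) / (c * n)) ^ ε
    have hu1 : u ≤ 1 := rpow_le_one (by positivity) ((div_le_one hcn).mpr hkn') hε.le
    have hrate_k : exp 1 * a ^ (1 + ε) * ((k : ℝ) / n) ^ ε = q * u := by
      rw [show (k : ℝ) / n = c * (k / (c * n)) by field_simp, mul_rpow hc.le (by positivity)]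
      ring
    have huM : u ≤ (c * n) ^ (-ε) * (k : ℝ) ^ M := by
      simp only [u]
      rw [div_rpow (by positivity) hcn.le, rpow_neg hcn.le, div_eq_inv_mul]
      gcongr
      exact_mod_cast rpow_le_rpow_of_exponent_le hk' (Nat.le_ceil ε)
    calc _ ≤ B * (q * u) ^ k := hrate_k ▸ expectedDenseSets_le hd hε hk1 hkn'
      _ ≤ B * (q ^ k * u) := by
          rw [mul_pow]
          gcongr
          exact pow_le_of_le_one (by positivity) hu1 (by omega)
      _ ≤ B * (q ^ k * ((c * n) ^ (-ε) * (k : ℝ) ^ M)) := by gcongr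
      _ = B * (c * n) ^ (-ε) * ((k : ℝ) ^ M * q ^ k) := by ring
  have hbound : ∀ n : ℕ, ∑ k ∈ Finset.Icc 1 ⌊c * n⌋₊,
      expectedDenseSets n k ε (d / n) ≤ B * D * (c * n) ^ (-ε) := fun n =>
    calc _ ≤ ∑ k ∈ Finset.Icc 1 ⌊c * n⌋₊, B * (c * n) ^ (-ε) * ((k : ℝ) ^ M * q ^ k) :=
          Finset.sum_le_sum (hterm n)
      _ ≤ B * (c * n) ^ (-ε) * D := by
          rw [← Finset.mul_sum]
          gcongr
          exact hsummable.sum_le_tsum _ fun k _ => by positivity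
      _ = B * D * (c * n) ^ (-ε) := by ring
  have hdecay : Tendsto (fun n : ℕ => B * D * (c * n) ^ (-ε)) atTop (nhds 0) := by
    simpa using ((tendsto_rpow_neg_atTop hε).comp
      (tendsto_natCast_atTop_atTop.const_mul_atTop hc)).const_mul (B * D)
  exact squeeze_zero
    (fun n => Finset.sum_nonneg fun k _ => expectedDenseSets_nonneg n k ε (by positivity))
    hbound hdecay

/-- For fixed reals `d > 0` and `ε > 0`, the probability that
`G(n, d/n)` contains a subgraph `G'` with `1 ≤ |G'| ≤ (4d)^{-(1+1/ε)}·n` and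
`‖G'‖ > (1+ε)·|G'|` tends to `0` as `n → ∞`. -/
theorem stmt_3 (d ε : ℝ) (hd : 0 < d) (hε : 0 < ε) :
    Tendsto
      (fun n : ℕ =>
        erdosRenyi n (d / n)
          {ω | ∃ H : (graphOf ω).Subgraph,
              1 ≤ Nat.card H.verts ∧
              (Nat.card H.verts : ℝ) ≤ (4 * d) ^ (-(1 + 1 / ε)) * (n : ℝ) ∧
              (1 + ε) * (Nat.card H.verts : ℝ) < (Nat.card H.edgeSet : ℝ)})
      atTop (nhds 0) := by
  have hc : 0 < (4 * d) ^ (-(1 + 1 / ε)) := by positivity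
  have hsum := ENNReal.tendsto_ofReal
    (tendsto_sum_expectedDenseSets hd hε hc (dense_rate_lt_one hd hε))
  rw [ENNReal.ofReal_zero] at hsum
  exact tendsto_of_tendsto_of_tendsto_of_le_of_le tendsto_const_nhds hsum (fun _ => zero_le)
    fun n => erdosRenyi_exists_small_dense_subgraph_le n (by positivity) hε.le _
end

section
/- Let G be a graph with a k-queue layout with vertex order < and queue assignment q, and let Q be the associated signed queue function. Let (v₁, v₂, …, v_r) and (w₁, w₂, …, w_r) be vertex-disjoint paths in G such that Q(v_i, v_{i+1}) = Q(w_i, w_{i+1}) for each i ∈ {1, …, r−1}. Then v₁ < w₁ if and only if v_r < w_r. -/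
open SimpleGraph MeasureTheory Filter

/-!
Equal signed queue values on two edges mean that the edges point in the same direction and lie in
the same queue. Two such edges are not nested, so their left endpoints are in the same order as
their right endpoints; walking along the two paths, the order of `vᵢ` and `wᵢ` never changes.
-/

section QueueLayout

variable {V : Type*} [LinearOrder V] {G : SimpleGraph V} {k : ℕ} {q : Sym2 V → Fin k}

theorem signedQueue_pos_iff {v w : V} : 0 < signedQueue q v w ↔ v < w := by
  unfold signedQueue
  split_ifs with h <;> simp only [h, iff_true, iff_false] <;> omega

theorem natAbs_signedQueue (v w : V) : (signedQueue q v w).natAbs = q s(v, w) + 1 := by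
  unfold signedQueue
  split_ifs <;> omega

theorem IsQueueLayout.lt_iff_lt (hq : IsQueueLayout G k q) {a a' b b' : V}
    (ha : G.Adj a a') (hb : G.Adj b b') (haa' : a < a') (hbb' : b < b')
    (hqe : q s(a, a') = q s(b, b')) (hab : a ≠ b) (hab' : a' ≠ b') :
    a < b ↔ a' < b' := by
  constructor
  · intro h
    by_contra h'
    exact hq ha hb haa' hbb' hqe ⟨h, (not_lt.1 h').lt_of_ne hab'.symm⟩
  · intro h
    by_contra h'
    exact hq hb ha hbb' haa' hqe.symm ⟨(not_lt.1 h').lt_of_ne hab.symm, h⟩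

theorem IsQueueLayout.lt_iff_lt_of_signedQueue_eq (hq : IsQueueLayout G k q) {a a' b b' : V}
    (ha : G.Adj a a') (hb : G.Adj b b') (hab : a ≠ b) (hab' : a' ≠ b')
    (hQ : signedQueue q a a' = signedQueue q b b') :
    a < b ↔ a' < b' := by
  have hqe : q s(a, a') = q s(b, b') :=
    Fin.ext (by simpa only [natAbs_signedQueue, add_left_inj] using congrArg Int.natAbs hQ)
  have hdir : a < a' ↔ b < b' := by rw [← signedQueue_pos_iff, hQ, signedQueue_pos_iff]
  rcases ha.ne.lt_or_gt with haa' | haa'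
  · exact hq.lt_iff_lt ha hb haa' (hdir.1 haa') hqe hab hab'
  · have hbb' : b' < b := (not_lt.1 (mt hdir.2 haa'.not_gt)).lt_of_ne hb.ne.symm
    rw [Sym2.eq_swap, Sym2.eq_swap (a := b)] at hqe
    exact (hq.lt_iff_lt ha.symm hb.symm haa' hbb' hqe hab' hab).symm

theorem IsQueueLayout.lt_iff_lt_of_forall_signedQueue_eq (hq : IsQueueLayout G k q)
    {v w : ℕ → V} (n : ℕ)
    (hv : ∀ i < n, G.Adj (v i) (v (i + 1))) (hw : ∀ i < n, G.Adj (w i) (w (i + 1)))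
    (hvw : ∀ i ≤ n, v i ≠ w i)
    (hQ : ∀ i < n, signedQueue q (v i) (v (i + 1)) = signedQueue q (w i) (w (i + 1))) :
    v 0 < w 0 ↔ v n < w n := by
  induction n with
  | zero => rfl
  | succ n ih =>
    refine (ih (fun i hi => hv i (by omega)) (fun i hi => hw i (by omega))
      (fun i hi => hvw i (by omega)) (fun i hi => hQ i (by omega))).trans ?_
    exact hq.lt_iff_lt_of_signedQueue_eq (hv n n.lt_succ_self) (hw n n.lt_succ_self)
      (hvw n n.le_succ) (hvw (n + 1) le_rfl) (hQ n n.lt_succ_self)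

end QueueLayout

theorem stmt_8_general {V : Type*} [LinearOrder V] (G : SimpleGraph V) (k : ℕ)
    (q : Sym2 V → Fin k) (hq : IsQueueLayout G k q)
    (r : ℕ) (v w : ℕ → V)
    (hv_adj : ∀ i, i + 1 < r → G.Adj (v i) (v (i + 1)))
    (hw_adj : ∀ i, i + 1 < r → G.Adj (w i) (w (i + 1)))
    (hdisj : ∀ i, i < r → ∀ j, j < r → v i ≠ w j)
    (hQ : ∀ i, i + 1 < r →
      signedQueue q (v i) (v (i + 1)) = signedQueue q (w i) (w (i + 1))) :
    (v 0 < w 0 ↔ v (r - 1) < w (r - 1)) := by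
  rcases Nat.eq_zero_or_pos r with rfl | hr
  · rfl
  exact hq.lt_iff_lt_of_forall_signedQueue_eq (r - 1) (fun i hi => hv_adj i (by omega))
    (fun i hi => hw_adj i (by omega)) (fun i hi => hdisj i (by omega) i (by omega))
    (fun i hi => hQ i (by omega))

/-- In a `k`-queue layout of `G`, if `(v₁,…,v_r)` and `(w₁,…,w_r)` are
vertex-disjoint paths with `Q(v_i, v_{i+1}) = Q(w_i, w_{i+1})` for each `i ∈ {1,…,r-1}`,
then `v₁ < w₁ ↔ v_r < w_r` (here indexed from `0`). -/
theorem stmt_8 {V : Type*} [LinearOrder V] [Fintype V] (G : SimpleGraph V) (k : ℕ)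
    (q : Sym2 V → Fin k) (hq : IsQueueLayout G k q)
    (r : ℕ) (hr : 1 ≤ r) (v w : ℕ → V)
    (hv_inj : ∀ i, i < r → ∀ j, j < r → i ≠ j → v i ≠ v j)
    (hw_inj : ∀ i, i < r → ∀ j, j < r → i ≠ j → w i ≠ w j)
    (hv_adj : ∀ i, i + 1 < r → G.Adj (v i) (v (i + 1)))
    (hw_adj : ∀ i, i + 1 < r → G.Adj (w i) (w (i + 1)))
    (hdisj : ∀ i, i < r → ∀ j, j < r → v i ≠ w j)
    (hQ : ∀ i, i + 1 < r →
      signedQueue q (v i) (v (i + 1)) = signedQueue q (w i) (w (i + 1))) :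
    (v 0 < w 0 ↔ v (r - 1) < w (r - 1)) :=
  stmt_8_general G k q hq r v w hv_adj hw_adj hdisj hQ
end

section
/- Let T be a forest and let T' be the 1-subdivision of T. If π(T') ≤ k then π(T) ≤ k(k+1)(2k+1). -/
open SimpleGraph MeasureTheory Filter

/-!
Root every component of the forest `T` and colour a vertex `x` by its `f`-colour, the `f`-colour
of the division vertex between `x` and its parent, and its depth mod 3, where `f` is a
non-repetitive colouring of `T'` with `k` colours. A path in a forest climbs and then descends;
the depths mod 3 prevent a repetitive path from turning, so up to reversal it climbs. Its
1-subdivision, with the division vertex above its top vertex appended, is then a path of `T'` of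
twice the length on which `f` is repetitive.
-/

section NonRepetitive

variable {V α β : Type*} {G : SimpleGraph V}

def IsPathSeq (G : SimpleGraph V) (n : ℕ) (v : ℕ → V) : Prop :=
  (∀ i < n, ∀ j < n, i ≠ j → v i ≠ v j) ∧ ∀ i, i + 1 < n → G.Adj (v i) (v (i + 1))

lemma IsPathSeq.reverse {n : ℕ} {v : ℕ → V} (hv : IsPathSeq G n v) :
    IsPathSeq G n fun i => v (n - 1 - i) := by
  refine ⟨fun i hi j hj hij => hv.1 _ (by omega) _ (by omega) (by omega), fun i hi => ?_⟩
  have h := hv.2 (n - 1 - (i + 1)) (by omega)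
  rw [show n - 1 - (i + 1) + 1 = n - 1 - i by omega] at h
  exact h.symm

lemma repetitive_reverse {c : V → α} {s : ℕ} {v : ℕ → V}
    (h : ∀ i < s, c (v i) = c (v (i + s))) :
    ∀ i < s, c (v (2 * s - 1 - i)) = c (v (2 * s - 1 - (i + s))) := by
  intro i hi
  rw [show 2 * s - 1 - i = s - 1 - i + s by omega, show 2 * s - 1 - (i + s) = s - 1 - i by omega]
  exact (h _ (by omega)).symm

lemma nonRepColoring_iff {f : V → α} :
    NonRepColoring G f ↔
      ∀ s, 0 < s → ∀ v, IsPathSeq G (2 * s) v → ¬∀ i < s, f (v i) = f (v (i + s)) := by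
  simp only [NonRepColoring, IsPathSeq, and_imp]

lemma nonRepColoring_of_injective {f : V → α} (hf : Function.Injective f) :
    NonRepColoring G f := fun s hs _ hinj _ hrep =>
  hinj 0 (by omega) (0 + s) (by omega) (by omega) (hf (hrep 0 hs))

lemma NonRepColoring.comp_injective {f : V → α} (hf : NonRepColoring G f) {g : α → β}
    (hg : Function.Injective g) : NonRepColoring G (g ∘ f) := fun s hs v hinj hadj hrep =>
  hf s hs v hinj hadj fun i hi => hg (hrep i hi)

lemma piNum_le_card [Fintype α] {f : V → α} (hf : NonRepColoring G f) :
    piNum G ≤ Fintype.card α :=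
  Nat.sInf_le ⟨_, hf.comp_injective (Fintype.equivFin α).injective⟩

lemma exists_nonRepColoring_of_piNum_le [Finite V] {k : ℕ} (h : piNum G ≤ k) :
    ∃ f : V → Fin k, NonRepColoring G f := by
  have : Fintype V := Fintype.ofFinite V
  have hne : {n : ℕ | ∃ f : V → Fin n, NonRepColoring G f}.Nonempty :=
    ⟨_, _, nonRepColoring_of_injective (Fintype.equivFin V).injective⟩
  obtain ⟨f, hf⟩ := Nat.sInf_mem hne
  exact ⟨_, hf.comp_injective (Fin.castLE_injective h)⟩

end NonRepetitive

namespace SubdivisionWitness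

variable {V W : Type*} {G : SimpleGraph V} {H : SimpleGraph W} (S : SubdivisionWitness G H)

open Classical in
/-- Junk value `S.emb a` when `a` and `b` are not adjacent. -/
noncomputable def mid (a b : V) : W :=
  if h : G.Adj a b then (S.path h).snd else S.emb a

noncomputable def subdivide (x : ℕ → V) (j : ℕ) : W :=
  if j % 2 = 0 then S.emb (x (j / 2)) else S.mid (x (j / 2)) (x (j / 2 + 1))

variable {S} {a b : V}

lemma mid_of_adj (h : G.Adj a b) : S.mid a b = (S.path h).snd := dif_pos h

lemma mid_mem_support (h : G.Adj a b) : S.mid a b ∈ (S.path h).support := by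
  rw [mid_of_adj h]
  exact Walk.getVert_mem_support _ _

lemma adj_emb_mid (h : G.Adj a b) : H.Adj (S.emb a) (S.mid a b) := by
  rw [mid_of_adj h]
  exact Walk.adj_snd (Walk.not_nil_of_ne (S.emb.injective.ne h.ne))

lemma adj_mid_emb (h : G.Adj a b) (hlen : (S.path h).length = 2) :
    H.Adj (S.mid a b) (S.emb b) := by
  have hnil : ¬(S.path h).Nil := Walk.not_nil_of_ne (S.emb.injective.ne h.ne)
  simpa [mid_of_adj h, Walk.penultimate, hlen] using Walk.adj_penultimate hnil

lemma emb_ne_mid (h : G.Adj a b) (hlen : (S.path h).length = 2) (c : V) :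
    S.emb c ≠ S.mid a b := by
  intro hc
  rcases S.internal_new h c (hc ▸ mid_mem_support h) with rfl | rfl
  · exact (adj_emb_mid h).ne hc
  · exact (adj_mid_emb h hlen).ne hc.symm

lemma sym2_eq_of_mid_eq {a' b' : V} (h : G.Adj a b) (h' : G.Adj a' b')
    (hlen : (S.path h).length = 2) (he : S.mid a b = S.mid a' b') : s(a, b) = s(a', b') := by
  by_contra hne
  obtain ⟨c, hc⟩ := S.internally_disjoint h h' hne _ (mid_mem_support h)
    (he ▸ mid_mem_support h')
  exact emb_ne_mid h hlen c hc

variable (S) (x : ℕ → V)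

lemma subdivide_two_mul (i : ℕ) : S.subdivide x (2 * i) = S.emb (x i) := by
  simp [subdivide]

lemma subdivide_two_mul_add_one (i : ℕ) :
    S.subdivide x (2 * i + 1) = S.mid (x i) (x (i + 1)) := by
  simp [subdivide, show (2 * i + 1) / 2 = i by omega]

variable {S x}

lemma isPathSeq_subdivide (hS : ∀ ⦃a b : V⦄ (h : G.Adj a b), (S.path h).length = 2) {n : ℕ}
    (hinj : ∀ i < n, ∀ j < n, i ≠ j → x i ≠ x j) (hadj : ∀ i < n, G.Adj (x i) (x (i + 1)))
    (hedge : ∀ i < n, ∀ j < n, i ≠ j → s(x i, x (i + 1)) ≠ s(x j, x (j + 1))) :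
    IsPathSeq H (2 * n) (S.subdivide x) := by
  constructor
  · intro j hj j' hj' hne
    obtain ⟨i, rfl | rfl⟩ := Nat.even_or_odd' j <;> obtain ⟨i', rfl | rfl⟩ := Nat.even_or_odd' j' <;>
      simp only [subdivide_two_mul, subdivide_two_mul_add_one]
    · exact S.emb.injective.ne (hinj i (by omega) i' (by omega) (by omega))
    · exact emb_ne_mid (hadj i' (by omega)) (hS _) (x i)
    · exact (emb_ne_mid (hadj i (by omega)) (hS _) (x i')).symm
    · exact fun he => hedge i (by omega) i' (by omega) (by omega)
        (sym2_eq_of_mid_eq (hadj i (by omega)) (hadj i' (by omega)) (hS _) he)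
  · intro j hj
    obtain ⟨i, rfl | rfl⟩ := Nat.even_or_odd' j
    · rw [subdivide_two_mul, subdivide_two_mul_add_one]
      exact adj_emb_mid (hadj i (by omega))
    · rw [subdivide_two_mul_add_one, show 2 * i + 1 + 1 = 2 * (i + 1) by ring, subdivide_two_mul]
      exact adj_mid_emb (hadj i (by omega)) (hS _)

end SubdivisionWitness

namespace SimpleGraph

variable {V : Type*} (G : SimpleGraph V)

noncomputable def root (v : V) : V := (G.connectedComponentMk v).out

noncomputable def depth (v : V) : ℕ := G.dist (G.root v) v

open Classical in
noncomputable def parent (v : V) : Option V :=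
  if h : ∃ u, G.Adj v u ∧ G.depth u + 1 = G.depth v then some h.choose else none

lemma reachable_root (v : V) : G.Reachable (G.root v) v :=
  ConnectedComponent.exact (Quot.out_eq _)

variable {G} {u v : V}

lemma root_eq_of_reachable (h : G.Reachable u v) : G.root u = G.root v := by
  rw [root, root, ConnectedComponent.sound h]

lemma adj_of_parent_eq_some (h : G.parent v = some u) : G.Adj v u := by
  unfold parent at h
  split_ifs at h with hex
  exact Option.some_inj.1 h ▸ hex.choose_spec.1

lemma depth_add_one_of_parent_eq_some (h : G.parent v = some u) :
    G.depth u + 1 = G.depth v := by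
  unfold parent at h
  split_ifs at h with hex
  exact Option.some_inj.1 h ▸ hex.choose_spec.2

namespace IsAcyclic

variable (hG : G.IsAcyclic)
include hG

lemma depth_eq_add_one_or (h : G.Adj u v) :
    G.depth u = G.depth v + 1 ∨ G.depth v = G.depth u + 1 := by
  have := hG.dist_eq_dist_add_one_of_adj_of_reachable (G.root u) h (G.reachable_root u)
  rwa [depth, depth, ← root_eq_of_reachable h.reachable]

lemma eq_of_adj_of_depth_add_one {u' : V} (hu : G.Adj v u) (hu' : G.Adj v u')
    (hd : G.depth u + 1 = G.depth v) (hd' : G.depth u' + 1 = G.depth v) : u = u' := by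
  classical
  obtain ⟨p, hp, -⟩ := (G.reachable_root v).exists_path_of_dist
  suffices key : ∀ w, G.Adj v w → G.depth w + 1 = G.depth v → w = p.penultimate from
    (key u hu hd).trans (key u' hu' hd').symm
  intro w hw hdw
  obtain ⟨q, hq, hql⟩ := ((G.reachable_root v).trans hw.reachable).exists_path_of_dist
  rw [depth, depth, root_eq_of_reachable hw.symm.reachable] at hdw
  refine hG.eq_penultimate_of_adj_end hp hw
    (hG.mem_support_of_ne_mem_support_of_adj_of_isPath hp hq hw fun hv => ?_)
  have h1 := G.dist_le (q.takeUntil v hv)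
  have h2 := q.length_takeUntil_le_length hv
  omega

lemma parent_eq_some (h : G.Adj v u) (hd : G.depth u + 1 = G.depth v) :
    G.parent v = some u := by
  have hex : ∃ u, G.Adj v u ∧ G.depth u + 1 = G.depth v := ⟨u, h, hd⟩
  rw [parent, dif_pos hex]
  exact congrArg some (hG.eq_of_adj_of_depth_add_one hex.choose_spec.1 h hex.choose_spec.2 hd)

lemma parent_eq_some_or (h : G.Adj u v) : G.parent u = some v ∨ G.parent v = some u := by
  rcases hG.depth_eq_add_one_or h with hd | hd
  · exact Or.inl (hG.parent_eq_some h hd.symm)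
  · exact Or.inr (hG.parent_eq_some h.symm hd.symm)

end IsAcyclic

lemma eq_of_parent_eq_some_of_sym2_eq {a b c d : V} (hab : G.parent a = some b)
    (hcd : G.parent c = some d) (he : s(a, b) = s(c, d)) : a = c := by
  rcases Sym2.eq_iff.1 he with ⟨rfl, rfl⟩ | ⟨rfl, rfl⟩
  · rfl
  · have := depth_add_one_of_parent_eq_some hab
    have := depth_add_one_of_parent_eq_some hcd
    omega

end SimpleGraph

lemma forall_or_forall_not_of_shift {P : ℕ → Prop} {s : ℕ}
    (hstep : ∀ i, i + 2 < 2 * s → ¬P i → ¬P (i + 1))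
    (hshift : ∀ i, i + 1 < s → P i → P (i + s)) :
    (∀ i, i + 1 < 2 * s → P i) ∨ ∀ i, i + 1 < 2 * s → ¬P i := by
  have hprop : ∀ i j, i ≤ j → j + 1 < 2 * s → ¬P i → ¬P j := by
    intro i j hij
    induction j, hij using Nat.le_induction with
    | base => exact fun _ h => h
    | succ j hij ih => exact fun hj h => hstep j (by omega) (ih (by omega) h)
  by_cases h0 : P 0
  · have hlow : ∀ i < s, P i := by
      intro i
      induction i with
      | zero => exact fun _ => h0
      | succ i ih =>
        intro hi
        by_contra h
        exact hprop (i + 1) (i + s) (by omega) (by omega) h (hshift i (by omega) (ih (by omega)))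
    refine Or.inl fun i hi => ?_
    rcases lt_or_ge i s with h | h
    · exact hlow i h
    · simpa [show i - s + s = i by omega] using hshift (i - s) (by omega) (hlow (i - s) (by omega))
  · exact Or.inr fun i hi => hprop 0 i (Nat.zero_le _) hi h0

namespace SimpleGraph.IsAcyclic

variable {V : Type*} {G : SimpleGraph V} (hG : G.IsAcyclic)
include hG

/-- A path of a rooted forest turns at most once, from ascending to descending. If the depths
mod 3 repeat with period `s`, an ascending edge `i` forces edge `i + s` to ascend too, so the path
cannot turn. -/
lemma ascending_or_descending {s : ℕ} {v : ℕ → V} (hv : IsPathSeq G (2 * s) v)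
    (hd : ∀ i < s, (G.depth (v i) : ZMod 3) = G.depth (v (i + s))) :
    (∀ i, i + 1 < 2 * s → G.parent (v i) = some (v (i + 1))) ∨
      ∀ i, i + 1 < 2 * s → G.parent (v (i + 1)) = some (v i) := by
  have hdown : ∀ i, i + 1 < 2 * s → G.parent (v i) ≠ some (v (i + 1)) →
      G.parent (v (i + 1)) = some (v i) :=
    fun i hi h => (hG.parent_eq_some_or (hv.2 i hi)).resolve_left h
  refine (forall_or_forall_not_of_shift ?_ ?_).imp id fun h i hi => hdown i hi (h i hi)
  · intro i hi hup hup'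
    have h := (hdown i (by omega) hup).symm.trans hup'
    exact hv.1 i (by omega) (i + 2) (by omega) (by omega) (Option.some_inj.1 h)
  · intro i hi hup
    by_contra hup'
    have e1 := depth_add_one_of_parent_eq_some hup
    have e2 := depth_add_one_of_parent_eq_some (hdown (i + s) (by omega) hup')
    have e3 := hd i (by omega)
    have e4 := hd (i + 1) (by omega)
    rw [← e1] at e3
    rw [show i + 1 + s = i + s + 1 by omega, ← e2] at e4
    push_cast at e3 e4
    have : (2 : ZMod 3) = 0 := by linear_combination e3 - e4
    exact absurd this (by decide)

end SimpleGraph.IsAcyclic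

namespace SubdivisionWitness

variable {V W α : Type*} {T : SimpleGraph V} {T' : SimpleGraph W}

noncomputable def parentColoring (S : SubdivisionWitness T T') (f : W → α) (x : V) :
    α × Option α × ZMod 3 :=
  (f (S.emb x), (T.parent x).map fun u => f (S.mid x u), (T.depth x : ZMod 3))

variable {S : SubdivisionWitness T T'} {f : W → α}

/-- The top vertex `v (2s-1)` has a parent `w`, since `v (s-1)` has one and the same colour.
Subdividing `v 0, …, v (2s-1), w` and dropping `w` gives a path of `T'` on which `f` repeats with
period `2s`. -/
lemma not_repetitive_of_ascending (hS : ∀ ⦃a b : V⦄ (h : T.Adj a b), (S.path h).length = 2)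
    (hf : NonRepColoring T' f) {s : ℕ} (hs : 0 < s) {v : ℕ → V} (hv : IsPathSeq T (2 * s) v)
    (hasc : ∀ i, i + 1 < 2 * s → T.parent (v i) = some (v (i + 1))) :
    ¬∀ i < s, S.parentColoring f (v i) = S.parentColoring f (v (i + s)) := by
  intro hrep
  obtain ⟨w, hw⟩ : ∃ w, T.parent (v (2 * s - 1)) = some w := by
    have h := congrArg (fun c => c.2.1) (hrep (s - 1) (by omega))
    simp only [parentColoring, hasc (s - 1) (by omega), Option.map_some,
      show s - 1 + s = 2 * s - 1 by omega] at h
    obtain ⟨w, hw, -⟩ := Option.map_eq_some_iff.1 h.symm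
    exact ⟨w, hw⟩
  set x : ℕ → V := fun i => if i < 2 * s then v i else w
  have hxv : ∀ i < 2 * s, x i = v i := fun i hi => if_pos hi
  have hxw : x (2 * s) = w := if_neg (lt_irrefl _)
  have hx : ∀ i < 2 * s, T.parent (x i) = some (x (i + 1)) := by
    intro i hi
    rcases lt_or_ge (i + 1) (2 * s) with h | h
    · rw [hxv i hi, hxv (i + 1) h, hasc i h]
    · obtain rfl : i = 2 * s - 1 := by omega
      rw [hxv _ hi, Nat.sub_add_cancel (by omega), hxw, hw]
  have hpath : IsPathSeq T' (2 * (2 * s)) (S.subdivide x) := by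
    have hinj : ∀ i < 2 * s, ∀ j < 2 * s, i ≠ j → x i ≠ x j := fun i hi j hj hij => by
      rw [hxv i hi, hxv j hj]
      exact hv.1 i hi j hj hij
    refine isPathSeq_subdivide hS hinj (fun i hi => adj_of_parent_eq_some (hx i hi))
      fun i hi j hj hij he => hinj i hi j hj hij ?_
    exact eq_of_parent_eq_some_of_sym2_eq (hx i hi) (hx j hj) he
  refine nonRepColoring_iff.1 hf (2 * s) (by omega) _ hpath fun j hj => ?_
  obtain ⟨i, rfl | rfl⟩ := Nat.even_or_odd' j
  · rw [show 2 * i + 2 * s = 2 * (i + s) by ring, subdivide_two_mul, subdivide_two_mul,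
      hxv i (by omega), hxv (i + s) (by omega)]
    exact congrArg Prod.fst (hrep i (by omega))
  · rw [show 2 * i + 1 + 2 * s = 2 * (i + s) + 1 by ring, subdivide_two_mul_add_one,
      subdivide_two_mul_add_one]
    have h := congrArg (fun c => c.2.1) (hrep i (by omega))
    simp only [parentColoring, ← hxv i (by omega), ← hxv (i + s) (by omega), hx i (by omega),
      hx (i + s) (by omega), Option.map_some, Option.some_inj] at h
    exact h

lemma nonRepColoring_parentColoring (hT : T.IsAcyclic)
    (hS : ∀ ⦃a b : V⦄ (h : T.Adj a b), (S.path h).length = 2) (hf : NonRepColoring T' f) :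
    NonRepColoring T (S.parentColoring f) := by
  refine nonRepColoring_iff.2 fun s hs v hv hrep => ?_
  rcases hT.ascending_or_descending hv fun i hi => congrArg (·.2.2) (hrep i hi) with hasc | hdesc
  · exact not_repetitive_of_ascending hS hf hs hv hasc hrep
  · refine not_repetitive_of_ascending hS hf hs hv.reverse (fun i hi => ?_)
      (repetitive_reverse hrep)
    have h := hdesc (2 * s - 1 - (i + 1)) (by omega)
    rwa [show 2 * s - 1 - (i + 1) + 1 = 2 * s - 1 - i by omega] at h

end SubdivisionWitness

theorem stmt_13_general {V W : Type*} [Fintype W]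
    (T : SimpleGraph V) (hT : T.IsAcyclic) (T' : SimpleGraph W)
    (hsub : IsExactSubdivision 1 T T') (k : ℕ) (hk : piNum T' ≤ k) :
    piNum T ≤ k * (k + 1) * (2 * k + 1) := by
  obtain ⟨S, hS⟩ := hsub
  obtain ⟨f, hf⟩ := exists_nonRepColoring_of_piNum_le hk
  calc piNum T ≤ Fintype.card (Fin k × Option (Fin k) × ZMod 3) :=
        piNum_le_card (SubdivisionWitness.nonRepColoring_parentColoring hT hS hf)
    _ = k * (k + 1) * 3 := by simp [ZMod.card, mul_assoc]
    _ ≤ k * (k + 1) * (2 * k + 1) := by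
      rcases Nat.eq_zero_or_pos k with rfl | hpos
      · simp
      · exact Nat.mul_le_mul_left _ (by omega)

/-- Let `T` be a forest and `T'` its `1`-subdivision. If `π(T') ≤ k` then
`π(T) ≤ k(k+1)(2k+1)`. -/
theorem stmt_13 {V W : Type*} [Fintype V] [Fintype W]
    (T : SimpleGraph V) (hT : T.IsAcyclic) (T' : SimpleGraph W)
    (hsub : IsExactSubdivision 1 T T') (k : ℕ) (hk : piNum T' ≤ k) :
    piNum T ≤ k * (k + 1) * (2 * k + 1) :=
  stmt_13_general T hT T' hsub k hk
end
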